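/- Every strictly decreasing word over a totally ordered alphabet is idempotent in the stylic monoid. -/

import Mathlib

noncomputable section

open FreeMonoid

/-- The defining relations of the stylic congruence: the Knuth (plactic)
relations together with the idempotent relations `a² ≡ a`. -/
inductive StylicRel (A : Type*) [LinearOrder A] : FreeMonoid A → FreeMonoid A → Prop
  | knuth1 {a b c : A} : a < b → b < c →
      StylicRel A (ofList [b, a, c]) (ofList [b, c, a])
  | knuth2 {a b c : A} : a < b → b < c →
      StylicRel A (ofList [a, c, b]) (ofList [c, a, b])
  | knuth3 {a b : A} : a < b →
      StylicRel A (ofList [b, a, b]) (ofList [b, b, a])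
  | knuth4 {a b : A} : a < b →
      StylicRel A (ofList [a, b, a]) (ofList [b, a, a])
  | idem (a : A) : StylicRel A (ofList [a, a]) (ofList [a])

/-- The stylic congruence on the free monoid `A*`. -/
def stylCon (A : Type*) [LinearOrder A] : Con (FreeMonoid A) := conGen (StylicRel A)

/-- The stylic monoid `Styl(A)`. -/
abbrev Styl (A : Type*) [LinearOrder A] := (stylCon A).Quotient

/-!
Write a strictly decreasing word as `a v` with `a` larger than every letter of `v`. In `a v a`
the last `a` travels leftwards through `v` by the Knuth relations `m s a ≡ m a s` (`s < m < a`),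
and the final step `a y a ≡ a a y` together with `a a ≡ a` gives `a v a ≡ a v`. Hence
`a v a v ≡ a v v`, and `v v ≡ v` by induction.
-/

namespace Styl

variable {A : Type*} [LinearOrder A]

def letter (a : A) : Styl A := (stylCon A).mk' (of a)

def word (w : List A) : Styl A := (w.map letter).prod

@[simp] theorem word_nil : word ([] : List A) = 1 := rfl

@[simp] theorem word_cons (a : A) (w : List A) : word (a :: w) = letter a * word w := rfl

theorem mk'_ofList (w : List A) : (stylCon A).mk' (ofList w) = word w := by
  induction w with
  | nil => rfl
  | cons a w ih => rw [ofList_cons, map_mul, ih, word_cons]; rfl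

theorem word_eq_of_stylicRel {u v : List A} (h : StylicRel A (ofList u) (ofList v)) :
    word u = word v := by
  rw [← mk'_ofList, ← mk'_ofList]
  exact (stylCon A).eq.mpr (ConGen.Rel.of _ _ h)

theorem letter_mul_letter_mul_letter_comm {a b c : A} (hab : a < b) (hbc : b < c) :
    letter b * letter a * letter c = letter b * letter c * letter a := by
  simpa [mul_assoc] using word_eq_of_stylicRel (StylicRel.knuth1 hab hbc)

theorem letter_mul_letter_mul_self {a b : A} (hab : a < b) :
    letter b * letter a * letter b = letter b * letter b * letter a := by
  simpa [mul_assoc] using word_eq_of_stylicRel (StylicRel.knuth3 hab)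

theorem letter_mul_self (a : A) : letter a * letter a = letter a := by
  simpa using word_eq_of_stylicRel (StylicRel.idem a)

theorem letter_mul_word_mul_letter {m a : A} {v : List A} (hv : (m :: v).IsChain (· > ·))
    (hma : m < a) : letter m * word v * letter a = letter m * letter a * word v := by
  induction v generalizing m with
  | nil => simp
  | cons s w ih =>
    obtain ⟨hsm, hw⟩ := List.isChain_cons_cons.mp hv
    calc letter m * word (s :: w) * letter a
        = letter m * (letter s * word w * letter a) := by simp [mul_assoc]
      _ = letter m * letter s * letter a * word w := by
          rw [ih hw (hsm.trans hma)]; simp only [mul_assoc]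
      _ = letter m * letter a * word (s :: w) := by
          rw [letter_mul_letter_mul_letter_comm hsm hma]; simp [mul_assoc]

theorem word_mul_letter_of_isChain {a : A} {v : List A} (hv : (a :: v).IsChain (· > ·)) :
    word (a :: v) * letter a = word (a :: v) := by
  cases v with
  | nil => simpa using letter_mul_self a
  | cons y w =>
    obtain ⟨hya, hw⟩ := List.isChain_cons_cons.mp hv
    calc word (a :: y :: w) * letter a
        = letter a * (letter y * word w * letter a) := by simp [mul_assoc]
      _ = letter a * letter y * letter a * word w := by
          rw [letter_mul_word_mul_letter hw hya]; simp only [mul_assoc]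
      _ = word (a :: y :: w) := by
          rw [letter_mul_letter_mul_self hya, letter_mul_self]; simp [mul_assoc]

theorem word_mul_self_of_isChain {w : List A} (hw : w.IsChain (· > ·)) :
    word w * word w = word w := by
  induction w with
  | nil => simp
  | cons a v ih =>
    calc word (a :: v) * word (a :: v) = word (a :: v) * letter a * word v := by
          simp [mul_assoc]
      _ = word (a :: v) := by
          rw [word_mul_letter_of_isChain hw, word_cons, mul_assoc, ih hw.tail]

end Styl

/-- every strictly decreasing word is idempotent in the
stylic monoid. -/
theorem styl_decreasing_word_idempotent {A : Type*} [LinearOrder A]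
    (l : List A) (hl : l.Chain' (· > ·)) :
    (stylCon A).mk' (ofList l) * (stylCon A).mk' (ofList l) =
      (stylCon A).mk' (ofList l) := by
  rw [Styl.mk'_ofList]
  exact Styl.word_mul_self_of_isChain hl
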